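/- arXiv:2209.15573 — 6 statements merged into one kernel-verified Lean document; each statement's English description precedes it below -/
import Mathlib

section
/- Let (X, μ) be a measure space with μ finite, let ν denote Lebesgue measure restricted to a compact interval [a,b] ⊆ ℝ, and let x : [a,b] → X be measurable with (ν.map x) ≤ M • μ for some M ≥ 0, so that C_x : L²(μ) → L²(ν), C_x(g) = g ∘ x, is a well-defined bounded linear operator. Let φ_0, …, φ_J ∈ L²(μ), ψ_0, …, ψ_K ∈ L²(ν), and λ ≥ 0. Define the encoder E : L²(μ) → ℝ^{K+1} by E(g)_k = ⟨C_x g, ψ_k⟩, the matrix G ∈ ℝ^{(K+1)×(J+1)} by G_{k,j} = ⟨C_x φ_j, ψ_k⟩, and the decoder D : ℝ^{J+1} → L²(μ) by D(w) = Σ_{j=0}^J w_j φ_j. Assume that for every b ∈ ℝ^{K+1} the problem min_{w ∈ ℝ^{J+1}} ‖G w − b‖ + λ‖w‖ has a unique minimizer, and call it S(b) (for fixed norms on ℝ^{K+1} and ℝ^{J+1}). Then the map P = D ∘ S ∘ E : L²(μ) → L²(μ) satisfies P(P(F)) = P(F) for every F ∈ L²(μ), i.e., P is a projection onto span{φ_0,…,φ_J}.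 -/
set_option autoImplicit false

open MeasureTheory Set

/-! The encoder applied to a decoded coefficient vector `w` returns `G w`, by linearity of
the integral. Hence `P (P F) = D (S (G w₀))` with `w₀ = S (E F)`, and it suffices that `w₀` is
also the minimizer for the data `G w₀`. Let `w₁ = S (G w₀)`; comparing with `w₀` gives
`‖G w₁ - G w₀‖ + λ‖w₁‖ ≤ λ‖w₀‖`, so by the triangle inequality `w₁` does at least as well as
`w₀` for the data `E F`, and uniqueness of that minimizer gives `w₁ = w₀`. -/

theorem MeasureTheory.MemLp.comp_of_map_le_smul {α β E : Type*} [MeasurableSpace α]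
    [MeasurableSpace β] [NormedAddCommGroup E] {μ : Measure β} {ν : Measure α} {x : α → β} {c p : ENNReal}
    {g : β → E} (hx : AEMeasurable x ν) (hc : c ≠ ⊤) (hdom : ν.map x ≤ c • μ)
    (hg : MemLp g p μ) : MemLp (g ∘ x) p ν :=
  ((hg.smul_measure hc).mono_measure hdom).comp_of_map hx

theorem integral_sum_mul_eq_mulVec {T ι κ : Type*} [MeasurableSpace T] [Fintype ι]
    {ν : Measure T} (f : ι → T → ℝ) (g : κ → T → ℝ)
    (hint : ∀ j k, Integrable (fun t => f j t * g k t) ν) (w : ι → ℝ) (k : κ) :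
    ∫ t, (∑ j, w j * f j t) * g k t ∂ν =
      (Matrix.of (fun k j => ∫ t, f j t * g k t ∂ν)).mulVec w k := by
  simp only [Finset.sum_mul, mul_assoc]
  rw [integral_finsetSum _ fun j _ => (hint j k).const_mul (w j)]
  simp only [integral_const_mul, Matrix.mulVec, dotProduct, Matrix.of_apply, mul_comm]

theorem minimizer_of_fitted_data_eq {V W : Type*} [AddGroup W] (A : V → W) (na : W → ℝ)
    (R : V → ℝ) (na_zero : na 0 = 0) (na_add : ∀ u v, na (u + v) ≤ na u + na v)
    (S : W → V) (hS : ∀ b w, na (A (S b) - b) + R (S b) ≤ na (A w - b) + R w)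
    (hS_uniq : ∀ b w, na (A w - b) + R w = na (A (S b) - b) + R (S b) → w = S b) (b : W) :
    S (A (S b)) = S b := by
  set w₀ := S b
  set w₁ := S (A w₀)
  have refit : na (A w₁ - A w₀) + R w₁ ≤ R w₀ := by
    simpa [na_zero] using hS (A w₀) w₀
  have triangle : na (A w₁ - b) ≤ na (A w₁ - A w₀) + na (A w₀ - b) := by
    simpa using na_add (A w₁ - A w₀) (A w₀ - b)
  exact hS_uniq b w₁ (le_antisymm (by linarith) (hS b w₁))

theorem weak_SINDy_projection_property_general
    {X : Type*} [MeasurableSpace X] (μ : Measure X)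
    (a b : ℝ) (x : ℝ → X) (hx : Measurable x)
    (M : ℝ)
    (hdom : (volume.restrict (Icc a b)).map x ≤ ENNReal.ofReal M • μ)
    {J K : ℕ} (φ : Fin (J + 1) → X → ℝ) (ψ : Fin (K + 1) → ℝ → ℝ)
    (hφ : ∀ j, MemLp (φ j) 2 μ)
    (hψ : ∀ k, MemLp (ψ k) 2 (volume.restrict (Icc a b)))
    (lam : ℝ)
    (na : (Fin (K + 1) → ℝ) → ℝ) (nb : (Fin (J + 1) → ℝ) → ℝ)
    -- `na` is a norm on ℝ^{K+1}
    (na_eq_zero : ∀ v, na v = 0 ↔ v = 0)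
    (na_add : ∀ v u, na (v + u) ≤ na v + na u)
    -- the encoder `E`, matrix `G` and decoder `D`
    (E : (X → ℝ) → (Fin (K + 1) → ℝ))
    (hE : ∀ g k, E g k = ∫ t in Icc a b, g (x t) * ψ k t)
    (G : Matrix (Fin (K + 1)) (Fin (J + 1)) ℝ)
    (hG : ∀ k j, G k j = ∫ t in Icc a b, φ j (x t) * ψ k t)
    (D : (Fin (J + 1) → ℝ) → (X → ℝ))
    (hD : ∀ w y, D w y = ∑ j, w j * φ j y)
    -- the solver `S` : `S bv` is the unique minimizer of `w ↦ na (G w − bv) + λ nb w`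
    (S : (Fin (K + 1) → ℝ) → (Fin (J + 1) → ℝ))
    (hS : ∀ bv w, na (G.mulVec (S bv) - bv) + lam * nb (S bv) ≤
      na (G.mulVec w - bv) + lam * nb w)
    (hS_uniq : ∀ bv w,
      na (G.mulVec w - bv) + lam * nb w =
        na (G.mulVec (S bv) - bv) + lam * nb (S bv) → w = S bv) :
    ∀ F : X → ℝ, MemLp F 2 μ → D (S (E (D (S (E F))))) = D (S (E F)) := by
  intro F _
  have hint : ∀ j k, Integrable (fun t => φ j (x t) * ψ k t) (volume.restrict (Icc a b)) :=
    fun j k => ((hφ j).comp_of_map_le_smul hx.aemeasurable ENNReal.ofReal_ne_top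
      hdom).integrable_mul (hψ k)
  have encode_decode : ∀ w, E (D w) = G.mulVec w := by
    intro w
    ext k
    simp only [hE, hD]
    rw [integral_sum_mul_eq_mulVec (fun j t => φ j (x t)) ψ hint]
    congr 2
    ext k j
    exact (hG k j).symm
  rw [encode_decode, minimizer_of_fitted_data_eq G.mulVec na (fun w => lam * nb w)
    ((na_eq_zero 0).2 rfl) na_add S hS hS_uniq]

/-- Proposition 2.3, projection property of weak-SINDy: with
`ν` Lebesgue measure on `[a,b]`, `μ` a finite measure, `x : [a,b] → X` measurable with
`ν.map x ≤ M • μ` (so `g ↦ g∘x` is bounded `L²(μ) → L²(ν)`), projection basis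
`φ_0,…,φ_J ∈ L²(μ)`, test functions `ψ_0,…,ψ_K ∈ L²(ν)`, encoder
`E(g)_k = ⟨g∘x, ψ_k⟩`, matrix `G_{k,j} = ⟨φ_j∘x, ψ_k⟩`, decoder
`D(w) = Σ_j w_j φ_j`, and solver `S(b)` the unique minimizer of
`w ↦ ‖G w − b‖ + λ‖w‖` (for fixed norms `na`, `nb`), the map `P = D ∘ S ∘ E`
satisfies `P(P(F)) = P(F)` for every `F ∈ L²(μ)`. -/
theorem weak_SINDy_projection_property
    {X : Type*} [MeasurableSpace X] (μ : Measure X) [IsFiniteMeasure μ]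
    (a b : ℝ) (hab : a ≤ b) (x : ℝ → X) (hx : Measurable x)
    (M : ℝ) (hM : 0 ≤ M)
    (hdom : (volume.restrict (Icc a b)).map x ≤ ENNReal.ofReal M • μ)
    {J K : ℕ} (φ : Fin (J + 1) → X → ℝ) (ψ : Fin (K + 1) → ℝ → ℝ)
    (hφ : ∀ j, MemLp (φ j) 2 μ)
    (hψ : ∀ k, MemLp (ψ k) 2 (volume.restrict (Icc a b)))
    (lam : ℝ) (hlam : 0 ≤ lam)
    (na : (Fin (K + 1) → ℝ) → ℝ) (nb : (Fin (J + 1) → ℝ) → ℝ)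
    -- `na` is a norm on ℝ^{K+1}
    (na_nonneg : ∀ v, 0 ≤ na v) (na_eq_zero : ∀ v, na v = 0 ↔ v = 0)
    (na_smul : ∀ (c : ℝ) v, na (c • v) = |c| * na v)
    (na_add : ∀ v u, na (v + u) ≤ na v + na u)
    -- `nb` is a norm on ℝ^{J+1}
    (nb_nonneg : ∀ w, 0 ≤ nb w) (nb_eq_zero : ∀ w, nb w = 0 ↔ w = 0)
    (nb_smul : ∀ (c : ℝ) w, nb (c • w) = |c| * nb w)
    (nb_add : ∀ w v, nb (w + v) ≤ nb w + nb v)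
    -- the encoder `E`, matrix `G` and decoder `D`
    (E : (X → ℝ) → (Fin (K + 1) → ℝ))
    (hE : ∀ g k, E g k = ∫ t in Icc a b, g (x t) * ψ k t)
    (G : Matrix (Fin (K + 1)) (Fin (J + 1)) ℝ)
    (hG : ∀ k j, G k j = ∫ t in Icc a b, φ j (x t) * ψ k t)
    (D : (Fin (J + 1) → ℝ) → (X → ℝ))
    (hD : ∀ w y, D w y = ∑ j, w j * φ j y)
    -- the solver `S` : `S bv` is the unique minimizer of `w ↦ na (G w − bv) + λ nb w`
    (S : (Fin (K + 1) → ℝ) → (Fin (J + 1) → ℝ))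
    (hS : ∀ bv w, na (G.mulVec (S bv) - bv) + lam * nb (S bv) ≤
      na (G.mulVec w - bv) + lam * nb w)
    (hS_uniq : ∀ bv w,
      na (G.mulVec w - bv) + lam * nb w =
        na (G.mulVec (S bv) - bv) + lam * nb (S bv) → w = S bv) :
    ∀ F : X → ℝ, MemLp F 2 μ → D (S (E (D (S (E F))))) = D (S (E F)) :=
  weak_SINDy_projection_property_general μ a b x hx M hdom φ ψ hφ hψ lam na nb na_eq_zero na_add E
    hE G hG D hD S hS hS_uniq
end

section
/- Let (ψ_k)_{k∈ℕ} be an orthonormal family in L²([a,b]), let g_0, …, g_J, F ∈ L²([a,b]), and for each K define G^K ∈ ℝ^{(K+1)×(J+1)} with entries (G^K)_{k,j} = ⟨g_j, ψ_k⟩ and b^K ∈ ℝ^{K+1} with entries (b^K)_k = ⟨F, ψ_k⟩. Suppose G^{K₀} is injective for some K₀, and for each K ≥ K₀ let w^K ∈ ℝ^{J+1} be the unique solution of the normal equations (G^K)ᵀ(G^K) w = (G^K)ᵀ b^K. Then the sequence (w^K)_{K ≥ K₀} is bounded in ℝ^{J+1}; specifically, ‖w^K‖_2 ≤ (Σ_{j=0}^J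 ‖g_j‖²_{L²([a,b])})^{1/2} · ‖F‖_{L²([a,b])} / λ_min((G^{K₀})ᵀ G^{K₀}) for all K ≥ K₀, where λ_min denotes the minimal eigenvalue. -/
set_option autoImplicit false

open MeasureTheory Set Matrix

open scoped InnerProductSpace MatrixOrder Matrix.Norms.L2Operator

/-!
Let `λ > 0` be the least eigenvalue of `(G^{K₀})ᵀ G^{K₀}` (positive since `G^{K₀}` is injective)
and `u = ∑ⱼ wⱼ gⱼ`. The `k`-th entry of `G^K w` is `⟪u, ψₖ⟫`, so `‖G^K w‖²` is a partial Bessel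
sum of `u`, increasing in `K`. For a solution `w` of the `K`-th normal equations,
`λ ‖w‖² ≤ ‖G^{K₀} w‖² ≤ ‖G^K w‖² = ⟪G^K w, b^K⟫ = ∑_{k ≤ K} ⟪u, ψₖ⟫ ⟪F, ψₖ⟫ ≤ ‖u‖ ‖F‖`
by Cauchy–Schwarz and Bessel, and `‖u‖ ≤ ‖w‖ (∑ⱼ ‖gⱼ‖²)^{1/2}`.
-/

theorem Matrix.IsHermitian.iInf_eigenvalues_mul_dotProduct_self_le {n : Type*} [Fintype n]
    [DecidableEq n] {A : Matrix n n ℝ} (hA : A.IsHermitian) (v : n → ℝ) :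
    (⨅ i, hA.eigenvalues i) * (v ⬝ᵥ v) ≤ v ⬝ᵥ A *ᵥ v := by
  have hle : algebraMap ℝ (Matrix n n ℝ) (⨅ i, hA.eigenvalues i) ≤ A := by
    rw [algebraMap_le_iff_le_spectrum (a := A) hA, hA.spectrum_real_eq_range_eigenvalues]
    rintro _ ⟨i, rfl⟩
    exact ciInf_le (Set.finite_range _).bddBelow i
  simpa [sub_mulVec, Algebra.algebraMap_eq_smul_one, smul_mulVec, dotProduct_sub] using
    (Matrix.le_iff.mp hle).dotProduct_mulVec_nonneg v

theorem Matrix.PosDef.iInf_eigenvalues_pos {n : Type*} [Fintype n] [DecidableEq n] [Nonempty n]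
    {A : Matrix n n ℝ} (hA : A.PosDef) (hH : A.IsHermitian) : 0 < ⨅ i, hH.eigenvalues i := by
  obtain ⟨i, hi⟩ := exists_eq_ciInf_of_finite (f := hH.eigenvalues)
  exact hi ▸ hA.eigenvalues_pos i

theorem Matrix.dotProduct_transpose_mul_mulVec {m n : Type*} [Fintype m] [Fintype n]
    (M : Matrix m n ℝ) (v : n → ℝ) : v ⬝ᵥ (Mᵀ * M) *ᵥ v = (M *ᵥ v) ⬝ᵥ (M *ᵥ v) := by
  rw [← mulVec_mulVec, dotProduct_mulVec, vecMul_transpose]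

section InnerProductSpace

variable {E : Type*} [NormedAddCommGroup E] [InnerProductSpace ℝ E]

theorem norm_sum_smul_le_sqrt_mul_sqrt {ι : Type*} (s : Finset ι) (v : ι → ℝ) (g : ι → E) :
    ‖∑ j ∈ s, v j • g j‖ ≤ √(∑ j ∈ s, v j ^ 2) * √(∑ j ∈ s, ‖g j‖ ^ 2) :=
  calc ‖∑ j ∈ s, v j • g j‖
      ≤ ∑ j ∈ s, |v j| * ‖g j‖ := (norm_sum_le _ _).trans_eq (by simp [norm_smul])
    _ ≤ √(∑ j ∈ s, |v j| ^ 2) * √(∑ j ∈ s, ‖g j‖ ^ 2) := Real.sum_mul_le_sqrt_mul_sqrt _ _ _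
    _ = √(∑ j ∈ s, v j ^ 2) * √(∑ j ∈ s, ‖g j‖ ^ 2) := by simp only [sq_abs]

theorem Matrix.mulVec_eq_inner_sum_smul {κ ι : Type*} [Fintype ι] {M : Matrix κ ι ℝ}
    {g : ι → E} {ψ : κ → E} (hM : ∀ k j, M k j = ⟪g j, ψ k⟫_ℝ) (v : ι → ℝ) :
    M *ᵥ v = fun k => ⟪∑ j, v j • g j, ψ k⟫_ℝ := by
  ext k
  simp [mulVec, dotProduct, hM, sum_inner, inner_smul_left, mul_comm]

theorem Matrix.mulVec_dotProduct_eq_sum_range {n : ℕ} {ι : Type*} [Fintype ι]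
    {M : Matrix (Fin n) ι ℝ} {g : ι → E} {ψ : ℕ → E} (hM : ∀ k j, M k j = ⟪g j, ψ k⟫_ℝ)
    (v : ι → ℝ) (b : Fin n → ℝ) {y : E} (hb : ∀ k, b k = ⟪y, ψ k⟫_ℝ) :
    (M *ᵥ v) ⬝ᵥ b = ∑ k ∈ Finset.range n, ⟪∑ j, v j • g j, ψ k⟫_ℝ * ⟪y, ψ k⟫_ℝ := by
  rw [mulVec_eq_inner_sum_smul hM, funext hb]
  exact Fin.sum_univ_eq_sum_range (fun k => ⟪∑ j, v j • g j, ψ k⟫_ℝ * ⟪y, ψ k⟫_ℝ) n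

namespace Orthonormal

variable {ι : Type*} {ψ : ι → E} (hψ : Orthonormal ℝ ψ)
include hψ

theorem sum_inner_sq_le (x : E) (s : Finset ι) : ∑ i ∈ s, ⟪x, ψ i⟫_ℝ ^ 2 ≤ ‖x‖ ^ 2 := by
  simpa [Real.norm_eq_abs, sq_abs, real_inner_comm] using hψ.sum_inner_products_le (s := s) x

theorem sqrt_sum_inner_sq_le (x : E) (s : Finset ι) : √(∑ i ∈ s, ⟪x, ψ i⟫_ℝ ^ 2) ≤ ‖x‖ :=
  (Real.sqrt_le_sqrt (hψ.sum_inner_sq_le x s)).trans_eq (Real.sqrt_sq (norm_nonneg x))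

theorem sum_inner_mul_inner_le (x y : E) (s : Finset ι) :
    ∑ i ∈ s, ⟪x, ψ i⟫_ℝ * ⟪y, ψ i⟫_ℝ ≤ ‖x‖ * ‖y‖ :=
  (Real.sum_mul_le_sqrt_mul_sqrt s _ _).trans <|
    mul_le_mul (hψ.sqrt_sum_inner_sq_le x s) (hψ.sqrt_sum_inner_sq_le y s)
      (Real.sqrt_nonneg _) (norm_nonneg x)

end Orthonormal

end InnerProductSpace

theorem le_div_of_mul_sq_le_mul {c s C : ℝ} (hc : 0 < c) (hs : 0 ≤ s) (hC : 0 ≤ C)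
    (h : c * s ^ 2 ≤ s * C) : s ≤ C / c := by
  rw [le_div_iff₀ hc]
  rcases hs.eq_or_lt with rfl | hs
  · simpa using hC
  · exact le_of_mul_le_mul_left (by nlinarith) hs

/-- Lemma 3.10: Let `(ψ_k)` be an orthonormal family in `L²([a,b])`,
`g_0,…,g_J, F ∈ L²([a,b])`, `(G^K)_{k,j} = ⟨g_j, ψ_k⟩`, `(b^K)_k = ⟨F, ψ_k⟩`.  Suppose
`G^{K₀}` is injective and for each `K ≥ K₀` let `w^K` solve the normal equations
`(G^K)ᵀ(G^K) w = (G^K)ᵀ b^K`.  Then for all `K ≥ K₀`,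
`‖w^K‖₂ ≤ (Σ_j ‖g_j‖²)^{1/2} ‖F‖ / λ_min((G^{K₀})ᵀ G^{K₀})`. -/
theorem normal_equation_solutions_bounded
    (a b : ℝ) {J : ℕ}
    (ψ : ℕ → Lp ℝ 2 (volume.restrict (Icc a b))) (hψ : Orthonormal ℝ ψ)
    (g : Fin (J + 1) → Lp ℝ 2 (volume.restrict (Icc a b)))
    (F : Lp ℝ 2 (volume.restrict (Icc a b)))
    (G : (K : ℕ) → Matrix (Fin (K + 1)) (Fin (J + 1)) ℝ)
    (hG : ∀ (K : ℕ) (k : Fin (K + 1)) (j : Fin (J + 1)),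
      G K k j = (inner ℝ (g j) (ψ (k : ℕ)) : ℝ))
    (bvec : (K : ℕ) → Fin (K + 1) → ℝ)
    (hbvec : ∀ (K : ℕ) (k : Fin (K + 1)), bvec K k = (inner ℝ F (ψ (k : ℕ)) : ℝ))
    (K₀ : ℕ) (hHerm : ((G K₀)ᵀ * G K₀).IsHermitian)
    (hinj : Function.Injective fun w => (G K₀).mulVec w)
    (w : ℕ → Fin (J + 1) → ℝ)
    (hw : ∀ K, K₀ ≤ K →
      ((G K)ᵀ * G K).mulVec (w K) = (G K)ᵀ.mulVec (bvec K)) :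
    ∀ K, K₀ ≤ K →
      Real.sqrt (∑ j, w K j ^ 2) ≤
        Real.sqrt (∑ j, ‖g j‖ ^ 2) * ‖F‖ / (⨅ i, hHerm.eigenvalues i) := by
  intro K hK
  set u := ∑ j, w K j • g j
  have hGw (n : ℕ) (k : Fin (n + 1)) : (G n *ᵥ w K) k = ⟪u, ψ k⟫_ℝ :=
    congrFun (mulVec_eq_inner_sum_smul (hG n) (w K)) k
  have hww : w K ⬝ᵥ w K = √(∑ j, w K j ^ 2) ^ 2 := by
    rw [Real.sq_sqrt (by positivity)]
    simp [dotProduct, sq]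
  refine le_div_of_mul_sq_le_mul ((PosDef.conjTranspose_mul_self _ hinj).iInf_eigenvalues_pos hHerm)
    (Real.sqrt_nonneg _) (by positivity) ?_
  calc (⨅ i, hHerm.eigenvalues i) * √(∑ j, w K j ^ 2) ^ 2
      ≤ w K ⬝ᵥ ((G K₀)ᵀ * G K₀) *ᵥ w K := hww ▸ hHerm.iInf_eigenvalues_mul_dotProduct_self_le _
    _ = ∑ k ∈ Finset.range (K₀ + 1), ⟪u, ψ k⟫_ℝ * ⟪u, ψ k⟫_ℝ := by
      rw [dotProduct_transpose_mul_mulVec, mulVec_dotProduct_eq_sum_range (hG K₀) _ _ (hGw K₀)]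
    _ ≤ ∑ k ∈ Finset.range (K + 1), ⟪u, ψ k⟫_ℝ * ⟪u, ψ k⟫_ℝ :=
      Finset.sum_le_sum_of_subset_of_nonneg (Finset.range_subset_range.2 (by omega))
        fun _ _ _ => mul_self_nonneg _
    _ = ∑ k ∈ Finset.range (K + 1), ⟪u, ψ k⟫_ℝ * ⟪F, ψ k⟫_ℝ := by
      rw [← mulVec_dotProduct_eq_sum_range (hG K) _ _ (hGw K), ← dotProduct_transpose_mul_mulVec,
        hw K hK, dotProduct_transpose_mulVec, dotProduct_comm,
        mulVec_dotProduct_eq_sum_range (hG K) _ _ (hbvec K)]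
    _ ≤ ‖u‖ * ‖F‖ := hψ.sum_inner_mul_inner_le u F _
    _ ≤ √(∑ j, w K j ^ 2) * √(∑ j, ‖g j‖ ^ 2) * ‖F‖ :=
      mul_le_mul_of_nonneg_right (norm_sum_smul_le_sqrt_mul_sqrt _ _ _) (norm_nonneg F)
    _ = √(∑ j, w K j ^ 2) * (√(∑ j, ‖g j‖ ^ 2) * ‖F‖) := mul_assoc _ _ _
end

section
/- Let (ψ_k)_{k∈ℕ} be a Hilbert basis of L²([a,b]) with P_K the orthogonal projection onto span{ψ_0,…,ψ_K}, let F, g_0, …, g_J ∈ L²([a,b]), define G^K with entries (G^K)_{k,j} = ⟨g_j, ψ_k⟩, and define M_K(w) = ‖P_K(F − Σ_{j=0}^J w_j g_j)‖² and M_∞(w) = ‖F − Σ_{j=0}^J w_j g_j‖² on ℝ^{J+1}. Suppose G^{K₀} is injective for some K₀. Then there exists m > 0 such that for every K ≥ K₀ the function M_K is m-strongly convex on ℝ^{J+1} (with respect to the Euclidean norm), and the function M_∞ is also m-strongly convex on ℝ^{J+1}. -/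
/-!
Every `P K` is the orthogonal projection onto `span {ψ 0, …, ψ K}`, hence linear with
`‖P K₀ u‖ ≤ ‖P K u‖ ≤ ‖u‖` for `K₀ ≤ K`. Since `⟪P K₀ (∑ j, w j • g j), ψ k⟫ = (G K₀ *ᵥ w) k`,
the map `w ↦ P K₀ (∑ j, w j • g j)` is injective on the finite-dimensional space of weights,
so `m / 2 * ‖w‖ ^ 2 ≤ ‖P K₀ (∑ j, w j • g j)‖ ^ 2` for some `m > 0`, and a fortiori with `P K`
or without projection. As `‖·‖ ^ 2` is `2`-strongly convex, such a bound on a linear map `T`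
makes `w ↦ ‖e - T w‖ ^ 2` `m`-strongly convex.
-/

open MeasureTheory Set Matrix RealInnerProductSpace Submodule Function

instance Submodule.finiteDimensional_span_image_Iic {𝕜 V ι : Type*} [DivisionRing 𝕜]
    [AddCommGroup V] [Module 𝕜 V] [Preorder ι] [LocallyFiniteOrderBot ι] (ψ : ι → V) (K : ι) :
    FiniteDimensional 𝕜 (span 𝕜 (ψ '' Iic K)) :=
  FiniteDimensional.span_of_finite 𝕜 ((finite_Iic K).image ψ)

section InnerProductSpace

variable {E : Type*} [NormedAddCommGroup E] [InnerProductSpace ℝ E]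

lemma strongConvexOn_univ_norm_sq : StrongConvexOn univ 2 fun x : E ↦ ‖x‖ ^ 2 :=
  strongConvexOn_iff_convex.2 <| by simpa using convexOn_const (0 : ℝ) convex_univ

lemma strongConvexOn_norm_sub_sq {H : Type*} [NormedAddCommGroup H] [InnerProductSpace ℝ H]
    {m : ℝ} (T : H →ₗ[ℝ] E) (e : E) (hT : ∀ v, m / 2 * ‖v‖ ^ 2 ≤ ‖T v‖ ^ 2) :
    StrongConvexOn univ m fun w ↦ ‖e - T w‖ ^ 2 := by
  refine ⟨convex_univ, fun x _ y _ a b ha hb hab ↦ ?_⟩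
  obtain rfl : b = 1 - a := eq_sub_of_add_eq' hab
  have hcomb : e - T (a • x + (1 - a) • y) = a • (e - T x) + (1 - a) • (e - T y) := by
    simp only [map_add, map_smul]; module
  have hdiff : (e - T x) - (e - T y) = T (y - x) := by rw [map_sub]; abel
  calc ‖e - T (a • x + (1 - a) • y)‖ ^ 2
      ≤ a • ‖e - T x‖ ^ 2 + (1 - a) • ‖e - T y‖ ^ 2
          - a * (1 - a) * (2 / 2 * ‖T (y - x)‖ ^ 2) := by
        rw [hcomb, ← hdiff]
        exact strongConvexOn_univ_norm_sq.2 trivial trivial ha hb hab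
    _ ≤ a • ‖e - T x‖ ^ 2 + (1 - a) • ‖e - T y‖ ^ 2
          - a * (1 - a) * (m / 2 * ‖x - y‖ ^ 2) := by
        have hTyx : m / 2 * ‖x - y‖ ^ 2 ≤ 2 / 2 * ‖T (y - x)‖ ^ 2 := by
          simpa only [norm_sub_rev x y, div_self (two_ne_zero (α := ℝ)), one_mul] using hT (y - x)
        exact sub_le_sub_left (mul_le_mul_of_nonneg_left hTyx (mul_nonneg ha hb)) _

lemma norm_starProjection_le_of_le {U V : Submodule ℝ E} [U.HasOrthogonalProjection]
    [V.HasOrthogonalProjection] (h : U ≤ V) (x : E) :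
    ‖U.starProjection x‖ ≤ ‖V.starProjection x‖ := by
  rw [← starProjection_comp_starProjection_of_le h]
  exact U.norm_starProjection_apply_le _

lemma injective_starProjection_comp_linearCombination {ι κ : Type*} [Fintype ι]
    {S : Submodule ℝ E} [S.HasOrthogonalProjection] {g : ι → E} {ψ : κ → E} (hψ : ∀ k, ψ k ∈ S)
    {G : Matrix κ ι ℝ} (hG : ∀ k j, G k j = ⟪g j, ψ k⟫) (hinj : Injective G.mulVec) :
    Injective (S.starProjection.toLinearMap ∘ₗ Fintype.linearCombination ℝ g) := by
  refine (injective_iff_map_eq_zero _).2 fun w hw ↦ hinj ?_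
  ext k
  have hwk := congr(⟪$hw, ψ k⟫)
  rw [LinearMap.comp_apply, ContinuousLinearMap.coe_coe, inner_starProjection_left_eq_right,
    starProjection_eq_self_iff.2 (hψ k), Fintype.linearCombination_apply] at hwk
  simpa [mulVec, dotProduct, hG, sum_inner, real_inner_smul_left, mul_comm] using hwk

end InnerProductSpace

lemma exists_pos_mul_norm_sq_le_norm_sq {V W : Type*} [NormedAddCommGroup V] [NormedSpace ℝ V]
    [FiniteDimensional ℝ V] [NormedAddCommGroup W] [NormedSpace ℝ W] {T : V →ₗ[ℝ] W}
    (hT : Injective T) : ∃ m > 0, ∀ v, m / 2 * ‖v‖ ^ 2 ≤ ‖T v‖ ^ 2 := by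
  obtain ⟨C, hC, hanti⟩ := T.exists_antilipschitzWith (LinearMap.ker_eq_bot.2 hT)
  refine ⟨2 / C ^ 2, by positivity, fun v ↦ ?_⟩
  have hv : ‖v‖ ≤ C * ‖T v‖ := by simpa using hanti.le_mul_dist v 0
  rw [div_div_cancel_left' two_ne_zero, ← div_eq_inv_mul, div_le_iff₀ (by positivity)]
  calc ‖v‖ ^ 2 ≤ (C * ‖T v‖) ^ 2 := by gcongr
    _ = _ := by ring

theorem weak_SINDy_objectives_strongly_convex_general
    (a b : ℝ) {J : ℕ}
    (ψ : ℕ → Lp ℝ 2 (volume.restrict (Icc a b)))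
    (F : Lp ℝ 2 (volume.restrict (Icc a b)))
    (g : Fin (J + 1) → Lp ℝ 2 (volume.restrict (Icc a b)))
    (P : ℕ → Lp ℝ 2 (volume.restrict (Icc a b)) → Lp ℝ 2 (volume.restrict (Icc a b)))
    (hPmem : ∀ K u, P K u ∈ Submodule.span ℝ (ψ '' Set.Iic K))
    (hPorth : ∀ K u, ∀ v ∈ Submodule.span ℝ (ψ '' Set.Iic K),
      (inner ℝ (u - P K u) v : ℝ) = 0)
    (G : (K : ℕ) → Matrix (Fin (K + 1)) (Fin (J + 1)) ℝ)
    (hG : ∀ (K : ℕ) (k : Fin (K + 1)) (j : Fin (J + 1)),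
      G K k j = (inner ℝ (g j) (ψ (k : ℕ)) : ℝ))
    (MK : ℕ → EuclideanSpace ℝ (Fin (J + 1)) → ℝ)
    (hMK : ∀ K w, MK K w = ‖P K (F - ∑ j, w j • g j)‖ ^ 2)
    (Minf : EuclideanSpace ℝ (Fin (J + 1)) → ℝ)
    (hMinf : ∀ w, Minf w = ‖F - ∑ j, w j • g j‖ ^ 2)
    (K₀ : ℕ) (hinj : Function.Injective fun w => (G K₀).mulVec w) :
    ∃ m > (0 : ℝ),
      (∀ K, K₀ ≤ K →
        ConvexOn ℝ (Set.univ : Set (EuclideanSpace ℝ (Fin (J + 1))))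
          (fun w => MK K w - m / 2 * ‖w‖ ^ 2)) ∧
      ConvexOn ℝ (Set.univ : Set (EuclideanSpace ℝ (Fin (J + 1))))
        (fun w => Minf w - m / 2 * ‖w‖ ^ 2) := by
  set S : ℕ → Submodule ℝ (Lp ℝ 2 (volume.restrict (Icc a b))) := fun K ↦ span ℝ (ψ '' Iic K)
  have hP : ∀ K u, P K u = (S K).starProjection u := fun K u ↦
    ((S K).eq_starProjection_of_mem_of_inner_eq_zero (hPmem K u) (hPorth K u)).symm
  let L := Fintype.linearCombination ℝ g ∘ₗ (WithLp.linearEquiv 2 ℝ (Fin (J + 1) → ℝ)).toLinearMap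
  have hL : ∀ w, ∑ j, w j • g j = L w := fun w ↦ (Fintype.linearCombination_apply ..).symm
  have hψS : ∀ k : Fin (K₀ + 1), ψ k ∈ S K₀ := fun k ↦
    subset_span (mem_image_of_mem ψ (Nat.le_of_lt_succ k.isLt))
  have hinj₀ : Injective ((S K₀).starProjection.toLinearMap ∘ₗ L) :=
    (injective_starProjection_comp_linearCombination hψS (hG K₀) hinj).comp
      (WithLp.linearEquiv 2 ℝ _).injective
  obtain ⟨m, hm, hbound⟩ := exists_pos_mul_norm_sq_le_norm_sq hinj₀
  refine ⟨m, hm, fun K hK ↦ ?_, ?_⟩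
  · refine strongConvexOn_iff_convex.1 ?_
    simp_rw [funext (hMK K), hL, hP, map_sub]
    refine strongConvexOn_norm_sub_sq ((S K).starProjection.toLinearMap ∘ₗ L) _ fun v ↦
      (hbound v).trans ?_
    gcongr 1
    exact norm_starProjection_le_of_le (span_mono (image_mono (Iic_subset_Iic.2 hK))) _
  · refine strongConvexOn_iff_convex.1 ?_
    simp_rw [funext hMinf, hL]
    exact strongConvexOn_norm_sub_sq L F fun v ↦
      (hbound v).trans (pow_le_pow_left₀ (norm_nonneg _) ((S K₀).norm_starProjection_apply_le _) 2)

/-- Proposition 3.12: With `(ψ_k)` a Hilbert basis of `L²([a,b])`,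
`P K` the orthogonal projection onto `span{ψ_0,…,ψ_K}`, `F, g_0,…,g_J ∈ L²([a,b])`,
`(G^K)_{k,j} = ⟨g_j, ψ_k⟩`, `M_K(w) = ‖P_K(F − Σ_j w_j g_j)‖²` and
`M_∞(w) = ‖F − Σ_j w_j g_j‖²`, if `G^{K₀}` is injective then there is `m > 0` such
that `M_K` is `m`-strongly convex on `ℝ^{J+1}` (with the Euclidean norm) for every
`K ≥ K₀`, and `M_∞` is `m`-strongly convex as well.  (Here `m`-strong convexity of
`h` means convexity of `w ↦ h(w) − (m/2)‖w‖²`.) -/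
theorem weak_SINDy_objectives_strongly_convex
    (a b : ℝ) (hab : a < b) {J : ℕ}
    (ψ : ℕ → Lp ℝ 2 (volume.restrict (Icc a b))) (hψ : Orthonormal ℝ ψ)
    (hcomplete : (Submodule.span ℝ (Set.range ψ)).topologicalClosure = ⊤)
    (F : Lp ℝ 2 (volume.restrict (Icc a b)))
    (g : Fin (J + 1) → Lp ℝ 2 (volume.restrict (Icc a b)))
    (P : ℕ → Lp ℝ 2 (volume.restrict (Icc a b)) → Lp ℝ 2 (volume.restrict (Icc a b)))
    (hPmem : ∀ K u, P K u ∈ Submodule.span ℝ (ψ '' Set.Iic K))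
    (hPorth : ∀ K u, ∀ v ∈ Submodule.span ℝ (ψ '' Set.Iic K),
      (inner ℝ (u - P K u) v : ℝ) = 0)
    (G : (K : ℕ) → Matrix (Fin (K + 1)) (Fin (J + 1)) ℝ)
    (hG : ∀ (K : ℕ) (k : Fin (K + 1)) (j : Fin (J + 1)),
      G K k j = (inner ℝ (g j) (ψ (k : ℕ)) : ℝ))
    (MK : ℕ → EuclideanSpace ℝ (Fin (J + 1)) → ℝ)
    (hMK : ∀ K w, MK K w = ‖P K (F - ∑ j, w j • g j)‖ ^ 2)
    (Minf : EuclideanSpace ℝ (Fin (J + 1)) → ℝ)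
    (hMinf : ∀ w, Minf w = ‖F - ∑ j, w j • g j‖ ^ 2)
    (K₀ : ℕ) (hinj : Function.Injective fun w => (G K₀).mulVec w) :
    ∃ m > (0 : ℝ),
      (∀ K, K₀ ≤ K →
        ConvexOn ℝ (Set.univ : Set (EuclideanSpace ℝ (Fin (J + 1))))
          (fun w => MK K w - m / 2 * ‖w‖ ^ 2)) ∧
      ConvexOn ℝ (Set.univ : Set (EuclideanSpace ℝ (Fin (J + 1))))
        (fun w => Minf w - m / 2 * ‖w‖ ^ 2) :=
  weak_SINDy_objectives_strongly_convex_general a b ψ F g P hPmem hPorth G hG MK hMK Minf hMinf K₀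
    hinj
end

section
/- Let X ⊆ ℝ be a compact interval carrying a finite measure μ, let ν be Lebesgue measure on a compact interval [a,b], and let x : [a,b] → X be measurable such that c₁ • μ ≤ ν.map x ≤ c₂ • μ for constants 0 < c₁ ≤ c₂; consequently ‖h∘x‖_{L²(ν)} ≤ c₂^{1/2}‖h‖_{L²(μ)} and ‖h‖_{L²(μ)} ≤ c₁^{-1/2}‖h∘x‖_{L²(ν)} for all h ∈ L²(μ). Let f ∈ L²(μ), let 𝒫_J denote the real polynomials of degree at most J, and suppose q ∈ 𝒫_J minimizes the map p ↦ ‖(f − p)∘x‖_{L²(ν)} over 𝒫_J. Then for every p ∈ 𝒫_J: ‖q − p‖_{L²(μ)} ≤ (1 + (c₂/c₁)^{1/2}) · ‖f − p‖_{L²(μ)}. -/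
set_option autoImplicit false

open MeasureTheory Set

/-!
Write `ν` for Lebesgue measure on `[a, b]`. The two-sided domination `c₁ μ ≤ x_* ν ≤ c₂ μ` makes
`h ↦ h ∘ x` an isomorphism onto its image between `Lᵖ(μ)` and `Lᵖ(ν)`, with
`c₁^{1/p} ‖h‖_μ ≤ ‖h ∘ x‖_ν ≤ c₂^{1/p} ‖h‖_μ`. Minimality of `q` in the `ν`-norm therefore gives
`‖f - q‖_μ ≤ (c₂ / c₁)^{1/2} ‖f - p‖_μ`, and the triangle inequality through `f` finishes.
-/

theorem ENNReal.ofReal_sqrt (z : ℝ) : ENNReal.ofReal √z = ENNReal.ofReal z ^ (1 / 2 : ℝ) := by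
  rcases le_or_gt 0 z with hz | hz
  · rw [Real.sqrt_eq_rpow, ENNReal.ofReal_rpow_of_nonneg hz (by norm_num)]
  · rw [Real.sqrt_eq_zero'.2 hz.le, ENNReal.ofReal_of_nonpos hz.le, ENNReal.ofReal_zero,
      ENNReal.zero_rpow_of_pos (by norm_num)]

section CompositionOperator

variable {α β ε : Type*} [MeasurableSpace α] [MeasurableSpace β] [TopologicalSpace ε]
  [ContinuousENorm ε] {μ : Measure β} {ν : Measure α} {x : α → β} {p C C₁ C₂ : ENNReal}

theorem eLpNorm_comp_le_of_map_le_smul (hx : AEMeasurable x ν) {g : β → ε}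
    (hg : AEStronglyMeasurable g μ) (hle : ν.map x ≤ C • μ) :
    eLpNorm (g ∘ x) p ν ≤ C ^ (1 / p).toReal * eLpNorm g p μ := by
  rw [← eLpNorm_map_measure (hg.mono_ac (Measure.absolutelyContinuous_of_le_smul hle)) hx]
  exact (eLpNorm_mono_measure g hle).trans (eLpNorm_smul_measure_le C g p μ)

theorem mul_eLpNorm_le_eLpNorm_comp_of_smul_le_map (hx : AEMeasurable x ν) {g : β → ε}
    (hg : AEStronglyMeasurable g (ν.map x)) (hC : C ≠ 0) (hle : C • μ ≤ ν.map x) :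
    C ^ (1 / p).toReal * eLpNorm g p μ ≤ eLpNorm (g ∘ x) p ν := by
  rw [← eLpNorm_map_measure hg hx, ← smul_eq_mul, ← eLpNorm_smul_measure_of_ne_zero hC]
  exact eLpNorm_mono_measure g hle

theorem eLpNorm_le_of_eLpNorm_comp_le (hx : AEMeasurable x ν) (hC₁ : C₁ ≠ 0) (hC₁top : C₁ ≠ ⊤)
    (hlower : C₁ • μ ≤ ν.map x) (hupper : ν.map x ≤ C₂ • μ) {g h : β → ε}
    (hg : AEStronglyMeasurable g μ) (hh : AEStronglyMeasurable h μ)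
    (hgh : eLpNorm (g ∘ x) p ν ≤ eLpNorm (h ∘ x) p ν) :
    eLpNorm g p μ ≤ (C₂ / C₁) ^ (1 / p).toReal * eLpNorm h p μ := by
  have hr : 0 ≤ (1 / p).toReal := ENNReal.toReal_nonneg
  have hmap := Measure.absolutelyContinuous_of_le_smul hupper
  have key : C₁ ^ (1 / p).toReal * eLpNorm g p μ ≤ C₂ ^ (1 / p).toReal * eLpNorm h p μ :=
    (mul_eLpNorm_le_eLpNorm_comp_of_smul_le_map hx (hg.mono_ac hmap) hC₁ hlower).trans
      (hgh.trans (eLpNorm_comp_le_of_map_le_smul hx hh hupper))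
  rw [ENNReal.div_rpow_of_nonneg _ _ hr, ENNReal.div_eq_inv_mul, mul_assoc]
  exact (ENNReal.mul_le_iff_le_inv (ENNReal.rpow_pos (pos_iff_ne_zero.2 hC₁) hC₁top).ne'
    (ENNReal.rpow_ne_top_of_nonneg hr hC₁top)).mp key

end CompositionOperator
theorem best_composed_approximation_close_general
    (a b : ℝ)
    (μ : Measure ℝ)
    (x : ℝ → ℝ) (hx : Measurable x)
    (c₁ c₂ : ℝ) (hc₁ : 0 < c₁)
    (hdom_lower : ENNReal.ofReal c₁ • μ ≤ (volume.restrict (Icc a b)).map x)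
    (hdom_upper : (volume.restrict (Icc a b)).map x ≤ ENNReal.ofReal c₂ • μ)
    (f : ℝ → ℝ) (hf : MemLp f 2 μ)
    {J : ℕ} (q : Polynomial ℝ)
    (hqmin : ∀ p : Polynomial ℝ, p.natDegree ≤ J →
      eLpNorm (fun t => f (x t) - q.eval (x t)) 2 (volume.restrict (Icc a b)) ≤
        eLpNorm (fun t => f (x t) - p.eval (x t)) 2 (volume.restrict (Icc a b))) :
    ∀ p : Polynomial ℝ, p.natDegree ≤ J →
      eLpNorm (fun y => q.eval y - p.eval y) 2 μ ≤
        ENNReal.ofReal (1 + Real.sqrt (c₂ / c₁)) *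
          eLpNorm (fun y => f y - p.eval y) 2 μ := by
  intro p hp
  have hfp : AEStronglyMeasurable (fun y => f y - p.eval y) μ :=
    hf.1.sub p.continuous.aestronglyMeasurable
  have hfq : AEStronglyMeasurable (fun y => f y - q.eval y) μ :=
    hf.1.sub q.continuous.aestronglyMeasurable
  have quasi_optimal : eLpNorm (fun y => f y - q.eval y) 2 μ ≤
      ENNReal.ofReal √(c₂ / c₁) * eLpNorm (fun y => f y - p.eval y) 2 μ := by
    rw [ENNReal.ofReal_sqrt, ENNReal.ofReal_div_of_pos hc₁]
    convert eLpNorm_le_of_eLpNorm_comp_le hx.aemeasurable (ENNReal.ofReal_pos.2 hc₁).ne'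
      ENNReal.ofReal_ne_top hdom_lower hdom_upper hfq hfp (hqmin p hp)
    norm_num
  have hsub : (fun y => q.eval y - p.eval y) =
      (fun y => f y - p.eval y) - (fun y => f y - q.eval y) := by
    ext y; simp
  calc eLpNorm (fun y => q.eval y - p.eval y) 2 μ
      ≤ eLpNorm (fun y => f y - p.eval y) 2 μ + eLpNorm (fun y => f y - q.eval y) 2 μ :=
        hsub ▸ eLpNorm_sub_le hfp hfq one_le_two
    _ ≤ eLpNorm (fun y => f y - p.eval y) 2 μ +
        ENNReal.ofReal √(c₂ / c₁) * eLpNorm (fun y => f y - p.eval y) 2 μ := by gcongr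
    _ = ENNReal.ofReal (1 + √(c₂ / c₁)) * eLpNorm (fun y => f y - p.eval y) 2 μ := by
        rw [ENNReal.ofReal_add zero_le_one (Real.sqrt_nonneg _), ENNReal.ofReal_one, add_mul,
          one_mul]

/-- the chain of inequalities (r_bound) in Lemma 3.15: Let `X = [c,d]`
be a compact interval carrying a finite measure `μ`, `ν` Lebesgue measure on `[a,b]`,
and `x : [a,b] → X` measurable with `c₁ • μ ≤ ν.map x ≤ c₂ • μ` for `0 < c₁ ≤ c₂`
(so the composition operator `h ↦ h∘x` is bounded with bounded inverse).  If `q` is a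
polynomial of degree ≤ J minimizing `p ↦ ‖(f − p)∘x‖_{L²(ν)}` over polynomials of
degree ≤ J, then for every polynomial `p` of degree ≤ J,
`‖q − p‖_{L²(μ)} ≤ (1 + (c₂/c₁)^{1/2}) ‖f − p‖_{L²(μ)}`. -/
theorem best_composed_approximation_close
    (a b c d : ℝ) (hcd : c ≤ d)
    (μ : Measure ℝ) [IsFiniteMeasure μ] (hμX : μ (Icc c d)ᶜ = 0)
    (x : ℝ → ℝ) (hx : Measurable x) (hrange : ∀ t ∈ Icc a b, x t ∈ Icc c d)
    (c₁ c₂ : ℝ) (hc₁ : 0 < c₁) (hc₁₂ : c₁ ≤ c₂)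
    (hdom_lower : ENNReal.ofReal c₁ • μ ≤ (volume.restrict (Icc a b)).map x)
    (hdom_upper : (volume.restrict (Icc a b)).map x ≤ ENNReal.ofReal c₂ • μ)
    (f : ℝ → ℝ) (hf : MemLp f 2 μ)
    {J : ℕ} (q : Polynomial ℝ) (hq : q.natDegree ≤ J)
    (hqmin : ∀ p : Polynomial ℝ, p.natDegree ≤ J →
      eLpNorm (fun t => f (x t) - q.eval (x t)) 2 (volume.restrict (Icc a b)) ≤
        eLpNorm (fun t => f (x t) - p.eval (x t)) 2 (volume.restrict (Icc a b))) :
    ∀ p : Polynomial ℝ, p.natDegree ≤ J →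
      eLpNorm (fun y => q.eval y - p.eval y) 2 μ ≤
        ENNReal.ofReal (1 + Real.sqrt (c₂ / c₁)) *
          eLpNorm (fun y => f y - p.eval y) 2 μ :=
  best_composed_approximation_close_general a b μ x hx c₁ c₂ hc₁ hdom_lower hdom_upper f hf q hqmin
end

section
/- Let a ≤ α ≤ ξ ≤ β ≤ b be real numbers, f, p : ℝ → ℝ, and let x : [a,b] → ℝ be differentiable with x'(t) = f(x(t)) for all t ∈ [a,b], and x̂ : [α,β] → ℝ be differentiable with x̂'(t) = p(x̂(t)) for all t ∈ [α,β], with x(ξ) = x̂(ξ). Assume: (i) t ↦ f(x(t)) − p(x(t)) is measurable with ‖f∘x − p∘x‖_{L²([a,b])} ≤ ε for some ε > 0; (ii) p is Lipschitz with constant L on a set containing x([α,β]) ∪ x̂([α,β]); and (iii) (β − α)·L < 1. Then sup_{t∈[α,β]} |x(t) − x̂(t)| ≤ (β − α)^{1/2} · ε / (1 − (β − α)·L). -/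
set_option autoImplicit false

open MeasureTheory Set
open scoped Interval

/-!
Subtracting the two integral equations gives, for `t ∈ [α, β]`,
`x t - x̂ t = ∫_ξ^t (f ∘ x - p ∘ x) + ∫_ξ^t (p ∘ x - p ∘ x̂)`.
Cauchy–Schwarz bounds the first integral by `√(β - α) ε`, and the Lipschitz bound on `p` bounds
the second by `(β - α) L M`, where `M` is the maximum of `|x - x̂|` on `[α, β]`. At a maximiser
this reads `M ≤ √(β - α) ε + (β - α) L M`, which solves for `M` because `(β - α) L < 1`.
-/

theorem integral_norm_le_sqrt_measureReal_mul_of_eLpNorm_two_le {Ω E : Type*}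
    [MeasurableSpace Ω] [NormedAddCommGroup E] {μ : Measure Ω} [IsFiniteMeasure μ]
    {g : Ω → E} (hg : AEStronglyMeasurable g μ) {ε : ℝ} (hε : 0 ≤ ε)
    (hgε : eLpNorm g 2 μ ≤ ENNReal.ofReal ε) :
    ∫ u, ‖g u‖ ∂μ ≤ √(μ.real univ) * ε := by
  have holder : eLpNorm g 1 μ ≤ eLpNorm g 2 μ * μ univ ^ (1 / 2 : ℝ) := by
    convert eLpNorm_le_eLpNorm_mul_rpow_measure_univ (p := 1) (q := 2) (by norm_num) hg using 3
    norm_num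
  have hsqrt : μ univ ^ (1 / 2 : ℝ) = ENNReal.ofReal √(μ.real univ) := by
    rw [Real.sqrt_eq_rpow, ← ENNReal.ofReal_rpow_of_nonneg measureReal_nonneg (by norm_num),
      ofReal_measureReal]
  rw [integral_norm_eq_lintegral_enorm hg, ← eLpNorm_one_eq_lintegral_enorm]
  refine ENNReal.toReal_le_of_le_ofReal (by positivity) (holder.trans ?_)
  rw [ENNReal.ofReal_mul (Real.sqrt_nonneg _), ← hsqrt, mul_comm]
  gcongr

theorem norm_intervalIntegral_le_sqrt_mul_of_eLpNorm_two_le {E : Type*} [NormedAddCommGroup E]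
    [NormedSpace ℝ E] {g : ℝ → E} {a b ε : ℝ}
    (hg : AEStronglyMeasurable g (volume.restrict (Ι a b))) (hε : 0 ≤ ε)
    (hgε : eLpNorm g 2 (volume.restrict (Ι a b)) ≤ ENNReal.ofReal ε) :
    ‖∫ u in a..b, g u‖ ≤ √|b - a| * ε := by
  have : IsFiniteMeasure (volume.restrict (Ι a b)) := Real.isFiniteMeasure_restrict_Ioc _ _
  calc ‖∫ u in a..b, g u‖ ≤ ∫ u in Ι a b, ‖g u‖ :=
        intervalIntegral.norm_integral_le_integral_norm_uIoc
    _ ≤ √((volume.restrict (Ι a b)).real univ) * ε :=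
      integral_norm_le_sqrt_measureReal_mul_of_eLpNorm_two_le hg hε hgε
    _ = √|b - a| * ε := by
      rw [measureReal_restrict_apply_univ, measureReal_def, Real.volume_uIoc,
        ENNReal.toReal_ofReal (abs_nonneg _)]

theorem sub_eq_intervalIntegral_sub_of_hasDerivAt {E : Type*} [NormedAddCommGroup E]
    [NormedSpace ℝ E] [CompleteSpace E] {x y x' y' : ℝ → E} {a b : ℝ}
    (hx : ∀ t ∈ [[a, b]], HasDerivAt x (x' t) t) (hy : ∀ t ∈ [[a, b]], HasDerivAt y (y' t) t)
    (hint : IntervalIntegrable (fun t => x' t - y' t) volume a b) (ha : x a = y a) :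
    x b - y b = ∫ t in a..b, (x' t - y' t) := by
  rw [intervalIntegral.integral_eq_sub_of_hasDerivAt (fun t ht => (hx t ht).sub (hy t ht)) hint,
    Pi.sub_apply, Pi.sub_apply, ha, sub_self, sub_zero]

theorem abs_sub_le_mul_of_abs_sub_le {p : ℝ → ℝ} {s : Set ℝ} {L M u v : ℝ}
    (hLip : ∀ u ∈ s, ∀ v ∈ s, |p u - p v| ≤ L * |u - v|) (hLM : 0 ≤ L * M)
    (hu : u ∈ s) (hv : v ∈ s) (huv : |u - v| ≤ M) : |p u - p v| ≤ L * M := by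
  refine (hLip u hu v hv).trans ?_
  rcases le_or_gt 0 L with hL | hL
  · exact mul_le_mul_of_nonneg_left huv hL
  · exact (mul_nonpos_of_nonpos_of_nonneg hL.le (abs_nonneg _)).trans hLM

theorem abs_sub_le_of_eLpNorm_consistency_le {f p x xhat : ℝ → ℝ} {α β ξ ε K : ℝ}
    (hξ : ξ ∈ Icc α β) (hx : ∀ t ∈ Icc α β, HasDerivAt x (f (x t)) t)
    (hxhat : ∀ t ∈ Icc α β, HasDerivAt xhat (p (xhat t)) t) (hinit : x ξ = xhat ξ)
    (hg : AEStronglyMeasurable (fun s => f (x s) - p (x s)) (volume.restrict (Icc α β)))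
    (hε : 0 ≤ ε)
    (hgε : eLpNorm (fun s => f (x s) - p (x s)) 2 (volume.restrict (Icc α β)) ≤
      ENNReal.ofReal ε)
    (hpc : ContinuousOn (fun s => p (x s) - p (xhat s)) (Icc α β))
    (hpK : ∀ s ∈ Icc α β, |p (x s) - p (xhat s)| ≤ K) :
    ∀ t ∈ Icc α β, |x t - xhat t| ≤ √(β - α) * ε + (β - α) * K := by
  intro t ht
  have hI : [[ξ, t]] ⊆ Icc α β := uIcc_subset_Icc hξ ht
  have hμ : volume.restrict (Ι ξ t) ≤ volume.restrict (Icc α β) :=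
    Measure.restrict_mono (uIoc_subset_uIcc.trans hI) le_rfl
  have hlen : |t - ξ| ≤ β - α :=
    abs_sub_le_iff.2 ⟨by linarith [ht.2, hξ.1], by linarith [ht.1, hξ.2]⟩
  have hgi : IntervalIntegrable (fun s => f (x s) - p (x s)) volume ξ t :=
    IntegrableOn.intervalIntegrable <| IntegrableOn.mono_set
      (MemLp.integrable one_le_two ⟨hg, hgε.trans_lt ENNReal.ofReal_lt_top⟩) hI
  have hpi : IntervalIntegrable (fun s => p (x s) - p (xhat s)) volume ξ t :=
    (hpc.mono hI).intervalIntegrable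
  have hsplit : x t - xhat t =
      (∫ s in ξ..t, (f (x s) - p (x s))) + ∫ s in ξ..t, (p (x s) - p (xhat s)) := by
    rw [← intervalIntegral.integral_add hgi hpi]
    simp only [sub_add_sub_cancel]
    exact sub_eq_intervalIntegral_sub_of_hasDerivAt (fun s hs => hx s (hI hs))
      (fun s hs => hxhat s (hI hs)) (by simpa using hgi.add hpi) hinit
  have hK : 0 ≤ K := (abs_nonneg _).trans (hpK ξ hξ)
  calc |x t - xhat t|
      = ‖(∫ s in ξ..t, (f (x s) - p (x s))) + ∫ s in ξ..t, (p (x s) - p (xhat s))‖ := by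
        rw [hsplit, Real.norm_eq_abs]
    _ ≤ ‖∫ s in ξ..t, (f (x s) - p (x s))‖ + ‖∫ s in ξ..t, (p (x s) - p (xhat s))‖ :=
        norm_add_le _ _
    _ ≤ √|t - ξ| * ε + K * |t - ξ| :=
        add_le_add
          (norm_intervalIntegral_le_sqrt_mul_of_eLpNorm_two_le (hg.mono_measure hμ) hε
            ((eLpNorm_mono_measure _ hμ).trans hgε))
          (intervalIntegral.norm_integral_le_of_norm_le_const fun s hs =>
            hpK s (hI (uIoc_subset_uIcc hs)))
    _ ≤ √(β - α) * ε + (β - α) * K := by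
        rw [mul_comm K]; gcongr

/-- Proposition 3.18: Let `a ≤ α ≤ ξ ≤ β ≤ b`, let `x` solve `x' = f(x)`
on `[a,b]` and `x̂` solve `x̂' = p(x̂)` on `[α,β]` with `x(ξ) = x̂(ξ)`.  If
`‖f∘x − p∘x‖_{L²([a,b])} ≤ ε`, `p` is `L`-Lipschitz on a set containing
`x([α,β]) ∪ x̂([α,β])`, and `(β−α)·L < 1`, then
`sup_{t∈[α,β]} |x(t) − x̂(t)| ≤ (β−α)^{1/2} ε / (1 − (β−α)L)`. -/
theorem surrogate_solution_bound_lipschitz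
    (a b α β ξ : ℝ) (haα : a ≤ α) (hαξ : α ≤ ξ) (hξβ : ξ ≤ β) (hβb : β ≤ b)
    (f p : ℝ → ℝ) (x xhat : ℝ → ℝ)
    (hx : ∀ t ∈ Icc a b, HasDerivAt x (f (x t)) t)
    (hxhat : ∀ t ∈ Icc α β, HasDerivAt xhat (p (xhat t)) t)
    (hinit : x ξ = xhat ξ)
    (ε : ℝ) (hε : 0 < ε)
    (hmeas : Measurable fun s => f (x s) - p (x s))
    (hconsist : eLpNorm (fun s => f (x s) - p (x s)) 2 (volume.restrict (Icc a b)) ≤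
      ENNReal.ofReal ε)
    (L : ℝ) (s : Set ℝ) (hs : x '' Icc α β ∪ xhat '' Icc α β ⊆ s)
    (hLip : ∀ u ∈ s, ∀ v ∈ s, |p u - p v| ≤ L * |u - v|)
    (hsmall : (β - α) * L < 1) :
    ∀ t ∈ Icc α β,
      |x t - xhat t| ≤ Real.sqrt (β - α) * ε / (1 - (β - α) * L) := by
  have hIcc : Icc α β ⊆ Icc a b := Icc_subset_Icc haα hβb
  have hxs : MapsTo x (Icc α β) s := fun t ht => hs (Or.inl (mem_image_of_mem x ht))
  have hxhats : MapsTo xhat (Icc α β) s := fun t ht => hs (Or.inr (mem_image_of_mem xhat ht))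
  have hp : ContinuousOn p s := (LipschitzOnWith.of_dist_le' hLip).continuousOn
  have hxc : ContinuousOn x (Icc α β) := fun t ht =>
    (hx t (hIcc ht)).continuousAt.continuousWithinAt
  have hxhatc : ContinuousOn xhat (Icc α β) := fun t ht =>
    (hxhat t ht).continuousAt.continuousWithinAt
  obtain ⟨t₀, ht₀, hmax⟩ := isCompact_Icc.exists_isMaxOn (nonempty_Icc.2 (hαξ.trans hξβ))
    (hxc.sub hxhatc).abs
  have hLM : 0 ≤ L * |x t₀ - xhat t₀| := (abs_nonneg _).trans (hLip _ (hxs ht₀) _ (hxhats ht₀))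
  have hgap := abs_sub_le_of_eLpNorm_consistency_le ⟨hαξ, hξβ⟩ (fun t ht => hx t (hIcc ht))
    hxhat hinit hmeas.aestronglyMeasurable hε.le
    ((eLpNorm_mono_measure _ (Measure.restrict_mono hIcc le_rfl)).trans hconsist)
    ((hp.comp hxc hxs).sub (hp.comp hxhatc hxhats))
    fun u hu => abs_sub_le_mul_of_abs_sub_le hLip hLM (hxs hu) (hxhats hu) (hmax hu)
  have hM : |x t₀ - xhat t₀| ≤ Real.sqrt (β - α) * ε / (1 - (β - α) * L) := by
    rw [le_div_iff₀ (by linarith)]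
    linarith [hgap t₀ ht₀]
  exact fun t ht => (hmax ht).trans hM
end

section
/- Let a ≤ α ≤ ξ ≤ β ≤ b, N ∈ ℕ, f, p : ℝ^N → ℝ^N, and let x : [a,b] → ℝ^N be differentiable with x'(t) = f(x(t)) for all t ∈ [a,b], and x̂ : [α,β] → ℝ^N be differentiable with x̂'(t) = p(x̂(t)) for all t ∈ [α,β], with x(ξ) = x̂(ξ). Assume: (i) for every i ∈ {1,…,N}, t ↦ f_i(x(t)) − p_i(x(t)) is measurable with ‖f_i∘x − p_i∘x‖_{L²([a,b])} ≤ ε; (ii) for every i, the component p_i satisfies |p_i(u) − p_i(v)| ≤ L · max_{1≤j≤N}|u_j − v_j| for all u, v in a set containing x([α,β]) ∪ x̂([α,β]); and (iii) (β − α)·L < 1. Then max_{1≤i≤N} sup_{t∈[α,β]} |x_i(t) − x̂_i(t)| ≤ (β − α)^{1/2} · ε / (1 − (β − α)·L). -/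
/-!
Write `e = x - x̂`, so `e(ξ) = 0`. Component `i` of `e'` splits as the consistency error
`f_i(x) - p_i(x)` plus `p_i(x) - p_i(x̂)`. Integrating from `ξ`, the first part contributes at most
`√(β - α) ε` by Cauchy–Schwarz and the second at most `(β - α) L M`, where `M` is the maximum of
`‖e‖` on `[α, β]`. Hence `M ≤ √(β - α) ε + (β - α) L M`, and `(β - α) L < 1` lets the last term be
absorbed.
-/

set_option autoImplicit false

open MeasureTheory Set

theorem MeasureTheory.integral_norm_le_sqrt_measureReal_mul {X E : Type*} [MeasurableSpace X]
    [NormedAddCommGroup E] {μ : Measure X} [IsFiniteMeasure μ] {g : X → E} {ε : ℝ} (hε : 0 ≤ ε)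
    (hg : AEStronglyMeasurable g μ) (hg2 : eLpNorm g 2 μ ≤ ENNReal.ofReal ε) :
    ∫ a, ‖g a‖ ∂μ ≤ √(μ.real univ) * ε := by
  have hint : Integrable g μ :=
    MemLp.integrable one_le_two ⟨hg, hg2.trans_lt ENNReal.ofReal_lt_top⟩
  have hholder := eLpNorm_le_eLpNorm_mul_rpow_measure_univ one_le_two hg
  have hexp : (1 / ENNReal.toReal 1 - 1 / ENNReal.toReal 2) = (1 / 2 : ℝ) := by norm_num
  rw [hexp, ← ofReal_measureReal, ENNReal.ofReal_rpow_of_nonneg measureReal_nonneg (by norm_num),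
    ← Real.sqrt_eq_rpow, eLpNorm_one_eq_lintegral_enorm,
    ← ofReal_integral_norm_eq_lintegral_enorm hint] at hholder
  have hofReal := hholder.trans (mul_le_mul_left hg2 _)
  rw [← ENNReal.ofReal_mul hε, ENNReal.ofReal_le_ofReal_iff (by positivity)] at hofReal
  linarith

section

variable {E : Type*} [NormedAddCommGroup E] [NormedSpace ℝ E] [CompleteSpace E]
  {y y' d r : ℝ → E} {α β : ℝ}

theorem aestronglyMeasurable_restrict_Icc_of_hasDerivAt
    (hy : ∀ t ∈ Icc α β, HasDerivAt y (y' t) t) :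
    AEStronglyMeasurable y' (volume.restrict (Icc α β)) :=
  (aestronglyMeasurable_deriv y _).congr <|
    (ae_restrict_mem measurableSet_Icc).mono fun t ht => (hy t ht).deriv

theorem norm_sub_le_setIntegral_norm_of_hasDerivAt
    (hy : ∀ t ∈ Icc α β, HasDerivAt y (y' t) t) (hint : IntegrableOn y' (Icc α β))
    {s t : ℝ} (hs : s ∈ Icc α β) (ht : t ∈ Icc α β) :
    ‖y t - y s‖ ≤ ∫ σ in Icc α β, ‖y' σ‖ := by
  have hsub : uIcc s t ⊆ Icc α β := uIcc_subset_Icc hs ht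
  rw [← intervalIntegral.integral_eq_sub_of_hasDerivAt (fun σ hσ => hy σ (hsub hσ))
    (hint.mono_set hsub).intervalIntegrable]
  calc ‖∫ σ in s..t, y' σ‖ ≤ ∫ σ in uIoc s t, ‖y' σ‖ :=
        intervalIntegral.norm_integral_le_integral_norm_uIoc
    _ ≤ ∫ σ in Icc α β, ‖y' σ‖ :=
        setIntegral_mono_set hint.norm (.of_forall fun _ => norm_nonneg _)
          (uIoc_subset_uIcc.trans hsub).eventuallyLE

theorem norm_sub_le_of_hasDerivAt_add {B : ℝ}
    (hy : ∀ t ∈ Icc α β, HasDerivAt y (d t + r t) t) (hd : IntegrableOn d (Icc α β))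
    (hr : ∀ t ∈ Icc α β, ‖r t‖ ≤ B) {s t : ℝ} (hs : s ∈ Icc α β) (ht : t ∈ Icc α β) :
    ‖y t - y s‖ ≤ (∫ σ in Icc α β, ‖d σ‖) + (β - α) * B := by
  have hαβ : α ≤ β := hs.1.trans hs.2
  -- `r` is measurable as the difference of a derivative and `d`.
  have hr_meas : AEStronglyMeasurable r (volume.restrict (Icc α β)) := by
    convert (aestronglyMeasurable_restrict_Icc_of_hasDerivAt hy).sub hd.aestronglyMeasurable
      using 1
    ext t
    simp
  have hr_int : IntegrableOn r (Icc α β) :=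
    Integrable.of_bound hr_meas B ((ae_restrict_mem measurableSet_Icc).mono hr)
  calc ‖y t - y s‖ ≤ ∫ σ in Icc α β, ‖d σ + r σ‖ :=
        norm_sub_le_setIntegral_norm_of_hasDerivAt hy (hd.add hr_int) hs ht
    _ ≤ ∫ σ in Icc α β, (‖d σ‖ + B) :=
        setIntegral_mono_on (hd.add hr_int).norm (hd.norm.add (integrable_const B))
          measurableSet_Icc fun σ hσ => (norm_add_le _ _).trans (by linarith [hr σ hσ])
    _ = (∫ σ in Icc α β, ‖d σ‖) + (β - α) * B := by
        rw [integral_add hd.norm (integrable_const B), setIntegral_const,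
          Real.volume_real_Icc_of_le hαβ, smul_eq_mul]

theorem norm_sub_le_sqrt_mul_add_of_hasDerivAt_add {ε B : ℝ} (hε : 0 ≤ ε)
    (hy : ∀ t ∈ Icc α β, HasDerivAt y (d t + r t) t)
    (hd : AEStronglyMeasurable d (volume.restrict (Icc α β)))
    (hd2 : eLpNorm d 2 (volume.restrict (Icc α β)) ≤ ENNReal.ofReal ε)
    (hr : ∀ t ∈ Icc α β, ‖r t‖ ≤ B) {s t : ℝ} (hs : s ∈ Icc α β) (ht : t ∈ Icc α β) :
    ‖y t - y s‖ ≤ √(β - α) * ε + (β - α) * B := by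
  have hd_int : IntegrableOn d (Icc α β) :=
    MemLp.integrable one_le_two ⟨hd, hd2.trans_lt ENNReal.ofReal_lt_top⟩
  have hL1 : ∫ σ in Icc α β, ‖d σ‖ ≤ √(β - α) * ε := by
    simpa [Real.volume_real_Icc_of_le (hs.1.trans hs.2)] using
      integral_norm_le_sqrt_measureReal_mul hε hd hd2
  linarith [norm_sub_le_of_hasDerivAt_add hy hd_int hr hs ht]

end

theorem eq_of_abs_sub_le_mul_norm_of_neg {E : Type*} [NormedAddCommGroup E] {u v : E}
    {a b L : ℝ} (hL : L < 0) (h : |a - b| ≤ L * ‖u - v‖) : u = v := by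
  have : ‖u - v‖ ≤ 0 := by nlinarith [abs_nonneg (a - b), norm_nonneg (u - v)]
  exact sub_eq_zero.mp (norm_le_zero_iff.mp this)

/-- Proposition 4.3: system version of the Lipschitz solution-error bound.
Let `a ≤ α ≤ ξ ≤ β ≤ b`, let `x` solve `x' = f(x)` on `[a,b]` and `x̂` solve
`x̂' = p(x̂)` on `[α,β]` with `x(ξ) = x̂(ξ)`.  Assume each component consistency error
satisfies `‖f_i∘x − p_i∘x‖_{L²([a,b])} ≤ ε`, each `p_i` satisfies
`|p_i(u) − p_i(v)| ≤ L · max_j |u_j − v_j|` on a set containing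
`x([α,β]) ∪ x̂([α,β])`, and `(β−α)·L < 1`.  Then for every component `i` and every
`t ∈ [α,β]`, `|x_i(t) − x̂_i(t)| ≤ (β−α)^{1/2} ε / (1 − (β−α)L)`.
(Here `(Fin N → ℝ)` carries the sup norm, so `‖u − v‖ = max_j |u_j − v_j|`.) -/
theorem surrogate_solution_bound_lipschitz_system
    (a b α β ξ : ℝ) (haα : a ≤ α) (hαξ : α ≤ ξ) (hξβ : ξ ≤ β) (hβb : β ≤ b)
    (N : ℕ) (f p : (Fin N → ℝ) → (Fin N → ℝ)) (x xhat : ℝ → (Fin N → ℝ))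
    (hx : ∀ t ∈ Icc a b, HasDerivAt x (f (x t)) t)
    (hxhat : ∀ t ∈ Icc α β, HasDerivAt xhat (p (xhat t)) t)
    (hinit : x ξ = xhat ξ)
    (ε : ℝ) (hε : 0 < ε)
    (hmeas : ∀ i : Fin N, Measurable fun s => f (x s) i - p (x s) i)
    (hconsist : ∀ i : Fin N,
      eLpNorm (fun s => f (x s) i - p (x s) i) 2 (volume.restrict (Icc a b)) ≤
        ENNReal.ofReal ε)
    (L : ℝ) (s : Set (Fin N → ℝ)) (hs : x '' Icc α β ∪ xhat '' Icc α β ⊆ s)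
    (hLip : ∀ i : Fin N, ∀ u ∈ s, ∀ v ∈ s, |p u i - p v i| ≤ L * ‖u - v‖)
    (hsmall : (β - α) * L < 1) :
    ∀ i : Fin N, ∀ t ∈ Icc α β,
      |x t i - xhat t i| ≤ Real.sqrt (β - α) * ε / (1 - (β - α) * L) := by
  have hsub : Icc α β ⊆ Icc a b := Icc_subset_Icc haα hβb
  have hξ : ξ ∈ Icc α β := ⟨hαξ, hξβ⟩
  have hαβ : α ≤ β := hαξ.trans hξβ
  have hxs : ∀ t ∈ Icc α β, x t ∈ s := fun t ht => hs (.inl ⟨t, ht, rfl⟩)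
  have hxhats : ∀ t ∈ Icc α β, xhat t ∈ s := fun t ht => hs (.inr ⟨t, ht, rfl⟩)
  rcases lt_or_ge L 0 with hL | hL
  · intro i t ht
    rw [eq_of_abs_sub_le_mul_norm_of_neg hL (hLip i _ (hxs t ht) _ (hxhats t ht)), sub_self,
      abs_zero]
    exact div_nonneg (by positivity) (by linarith)
  have hcont : ContinuousOn (fun t => ‖x t - xhat t‖) (Icc α β) :=
    continuousOn_of_forall_continuousAt fun t ht =>
      ((hx t (hsub ht)).continuousAt.sub (hxhat t ht).continuousAt).norm
  obtain ⟨t₀, ht₀, hmax⟩ := isCompact_Icc.exists_isMaxOn (nonempty_Icc.2 hαβ) hcont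
  set M := ‖x t₀ - xhat t₀‖
  have hcomp : ∀ i, ∀ t ∈ Icc α β, |x t i - xhat t i| ≤ √(β - α) * ε + (β - α) * (L * M) := by
    intro i t ht
    have hderiv : ∀ σ ∈ Icc α β, HasDerivAt (fun σ => x σ i - xhat σ i)
        ((f (x σ) i - p (x σ) i) + (p (x σ) i - p (xhat σ) i)) σ := fun σ hσ =>
      ((hasDerivAt_pi.mp (hx σ (hsub hσ)) i).sub (hasDerivAt_pi.mp (hxhat σ hσ) i)).congr_deriv
        (by ring)
    have hr : ∀ σ ∈ Icc α β, ‖p (x σ) i - p (xhat σ) i‖ ≤ L * M := fun σ hσ =>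
      (hLip i _ (hxs σ hσ) _ (hxhats σ hσ)).trans (mul_le_mul_of_nonneg_left (hmax hσ) hL)
    simpa [hinit] using norm_sub_le_sqrt_mul_add_of_hasDerivAt_add hε.le hderiv
      (hmeas i).aestronglyMeasurable
      ((eLpNorm_mono_measure _ (Measure.restrict_mono hsub le_rfl)).trans (hconsist i)) hr hξ ht
  have hM : M ≤ √(β - α) * ε + (β - α) * (L * M) :=
    (pi_norm_le_iff_of_nonneg (by have := sub_nonneg.2 hαβ; positivity)).2
      fun i => hcomp i t₀ ht₀
  intro i t ht
  calc |x t i - xhat t i| ≤ M := (norm_le_pi_norm (x t - xhat t) i).trans (hmax ht)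
    _ ≤ √(β - α) * ε / (1 - (β - α) * L) := by
      rw [le_div_iff₀ (by linarith)]
      linarith
end
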